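/- arXiv:0802.3589 — 2 statements merged into one kernel-verified Lean document; each statement's English description precedes it below -/
import Mathlib

section
/- Let (f_k)_{k∈ℕ} be a frame sequence in H with bounds A, B > 0 and synthesis operator T. Then for every c ∈ ℓ²(ℕ), A‖Qc‖² ≤ ‖Tc‖² ≤ B‖Qc‖². -/
/- Setting: `H` is a complex Hilbert space, `ℓ2` is the Hilbert space of square-summable
complex sequences with standard orthonormal basis `lp.single 2 k 1`. -/

noncomputable section

abbrev ℓ2 : Type := lp (fun _ : ℕ => ℂ) 2

variable {H : Type} [NormedAddCommGroup H] [InnerProductSpace ℂ H] [CompleteSpace H]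

/-- The closed linear span `V` of the set of values of the sequence `f`. -/
def spanClosure (f : ℕ → H) : Submodule ℂ H :=
  (Submodule.span ℂ (Set.range f)).topologicalClosure

instance (f : ℕ → H) : CompleteSpace (spanClosure f) :=
  Submodule.topologicalClosure.completeSpace _

/-- `f` is a frame sequence with frame bounds `A`, `B`:  the frame inequality
`A‖g‖² ≤ ∑ₖ |⟨g, fₖ⟩|² ≤ B‖g‖²` holds for every `g` in the closed linear span `V` of the `fₖ`.
(In Mathlib's convention, the paper's `⟨g, fₖ⟩`, linear in the first argument, is `⟪fₖ, g⟫`.) -/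
def IsFrameSeqWith (f : ℕ → H) (A B : ℝ) : Prop :=
  0 < A ∧ 0 < B ∧
    ∀ g ∈ spanClosure f,
      Summable (fun k => ‖(inner ℂ (f k) g : ℂ)‖ ^ 2) ∧
      A * ‖g‖ ^ 2 ≤ ∑' k, ‖(inner ℂ (f k) g : ℂ)‖ ^ 2 ∧
      (∑' k, ‖(inner ℂ (f k) g : ℂ)‖ ^ 2) ≤ B * ‖g‖ ^ 2

/-- The orthogonal projection `Q` of `ℓ2` onto `(ker T)ᗮ`, as an operator `ℓ2 → ℓ2`. -/
def projQ (T : ℓ2 →L[ℂ] H) : ℓ2 →L[ℂ] ℓ2 :=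
  (LinearMap.ker (T : ℓ2 →ₗ[ℂ] H))ᗮ.subtypeL ∘L
    Submodule.orthogonalProjectionOnto (LinearMap.ker (T : ℓ2 →ₗ[ℂ] H))ᗮ

/-! The coefficients of `T† g` are `⟪fₖ, g⟫`, so the frame inequalities say
`A‖g‖² ≤ ‖T† g‖² ≤ B‖g‖²` on `V ⊇ range T`. Cauchy–Schwarz gives `‖S y‖⁴ ≤ ‖y‖² ‖S† S y‖²` for
every operator `S`: for `S = T` and the upper frame bound at `T c` this yields `‖T c‖² ≤ B‖c‖²`,
for `S = T†` and the lower frame bound it yields `A‖T† g‖² ≤ ‖T T† g‖²` on `V`. As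
`ker T = (T† V)ᗮ`, the second bound extends by continuity to `(ker T)ᗮ`, and `T (Q c) = T c`. -/

open scoped InnerProduct

theorem ContinuousLinearMap.apply_starProjection_orthogonal_ker {𝕜 E F : Type*} [RCLike 𝕜]
    [NormedAddCommGroup E] [InnerProductSpace 𝕜 E] [CompleteSpace E]
    [NormedAddCommGroup F] [NormedSpace 𝕜 F] (T : E →L[𝕜] F) (x : E) :
    T (T.kerᗮ.starProjection x) = T x := by
  have h := T.kerᗮ.sub_starProjection_mem_orthogonal x
  rw [Submodule.orthogonal_orthogonal, LinearMap.mem_ker, map_sub, sub_eq_zero] at h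
  exact h.symm

section OperatorBounds

variable {𝕜 E F : Type*} [RCLike 𝕜]
  [NormedAddCommGroup E] [InnerProductSpace 𝕜 E] [CompleteSpace E]
  [NormedAddCommGroup F] [InnerProductSpace 𝕜 F] [CompleteSpace F]

namespace ContinuousLinearMap

theorem norm_apply_sq_le_norm_mul_norm_adjoint_apply (T : E →L[𝕜] F) (x : E) :
    ‖T x‖ ^ 2 ≤ ‖x‖ * ‖(T†) (T x)‖ := by
  rw [T.apply_norm_sq_eq_inner_adjoint_right]
  exact (RCLike.re_le_norm _).trans (norm_inner_le_norm _ _)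

theorem norm_apply_pow_four_le (T : E →L[𝕜] F) (x : E) :
    ‖T x‖ ^ 4 ≤ ‖x‖ ^ 2 * ‖(T†) (T x)‖ ^ 2 := by
  have h := pow_le_pow_left₀ (by positivity) (T.norm_apply_sq_le_norm_mul_norm_adjoint_apply x) 2
  linarith

theorem norm_apply_sq_le_of_norm_adjoint_apply_sq_le {B : ℝ} (hB : 0 ≤ B) (T : E →L[𝕜] F)
    {x : E} (h : ‖(T†) (T x)‖ ^ 2 ≤ B * ‖T x‖ ^ 2) : ‖T x‖ ^ 2 ≤ B * ‖x‖ ^ 2 := by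
  rcases (sq_nonneg ‖T x‖).eq_or_lt with hTx | hTx
  · rw [← hTx]; positivity
  refine le_of_mul_le_mul_left ?_ hTx
  calc ‖T x‖ ^ 2 * ‖T x‖ ^ 2 = ‖T x‖ ^ 4 := by ring
    _ ≤ ‖x‖ ^ 2 * ‖(T†) (T x)‖ ^ 2 := T.norm_apply_pow_four_le x
    _ ≤ ‖x‖ ^ 2 * (B * ‖T x‖ ^ 2) := by gcongr
    _ = ‖T x‖ ^ 2 * (B * ‖x‖ ^ 2) := by ring

theorem mul_norm_adjoint_apply_sq_le {A : ℝ} (hA : 0 ≤ A) (T : E →L[𝕜] F) {y : F}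
    (h : A * ‖y‖ ^ 2 ≤ ‖(T†) y‖ ^ 2) : A * ‖(T†) y‖ ^ 2 ≤ ‖T ((T†) y)‖ ^ 2 := by
  rcases (sq_nonneg ‖(T†) y‖).eq_or_lt with hTy | hTy
  · rw [← hTy, mul_zero]; positivity
  refine le_of_mul_le_mul_left ?_ hTy
  calc ‖(T†) y‖ ^ 2 * (A * ‖(T†) y‖ ^ 2) = A * ‖(T†) y‖ ^ 4 := by ring
    _ ≤ A * (‖y‖ ^ 2 * ‖T ((T†) y)‖ ^ 2) := by
      simpa only [adjoint_adjoint] using mul_le_mul_of_nonneg_left (T†.norm_apply_pow_four_le y) hA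
    _ = A * ‖y‖ ^ 2 * ‖T ((T†) y)‖ ^ 2 := by ring
    _ ≤ ‖(T†) y‖ ^ 2 * ‖T ((T†) y)‖ ^ 2 := by gcongr

theorem ker_eq_orthogonal_map_adjoint (T : E →L[𝕜] F) {V : Submodule 𝕜 F}
    (hV : T.range ≤ V) : T.ker = (V.map (T† : F →ₗ[𝕜] E))ᗮ := by
  ext x
  simp only [LinearMap.mem_ker, Submodule.mem_orthogonal, Submodule.mem_map, coe_coe,
    forall_exists_index, and_imp, forall_apply_eq_imp_iff₂, adjoint_inner_left]
  constructor
  · intro hx y _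
    rw [hx, inner_zero_right]
  · intro hx
    exact inner_self_eq_zero.mp (hx (T x) (hV ⟨x, rfl⟩))

theorem mul_norm_sq_le_norm_apply_sq_of_mem_orthogonal_ker {A : ℝ} (hA : 0 ≤ A)
    (T : E →L[𝕜] F) {V : Submodule 𝕜 F} (hV : T.range ≤ V)
    (hV_lower : ∀ y ∈ V, A * ‖y‖ ^ 2 ≤ ‖(T†) y‖ ^ 2) {x : E} (hx : x ∈ T.kerᗮ) :
    A * ‖x‖ ^ 2 ≤ ‖T x‖ ^ 2 := by
  rw [T.ker_eq_orthogonal_map_adjoint hV, Submodule.orthogonal_orthogonal_eq_closure,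
    ← SetLike.mem_coe, Submodule.topologicalClosure_coe] at hx
  have hclosed : IsClosed {x : E | A * ‖x‖ ^ 2 ≤ ‖T x‖ ^ 2} :=
    isClosed_le (by fun_prop) (by fun_prop)
  refine closure_minimal ?_ hclosed hx
  rintro _ ⟨y, hy, rfl⟩
  exact mul_norm_adjoint_apply_sq_le hA T (hV_lower y hy)

end ContinuousLinearMap

end OperatorBounds

section Frames

variable {E : Type} [NormedAddCommGroup E] [InnerProductSpace ℂ E]

def IsSynthesisOperator (f : ℕ → E) (T : ℓ2 →L[ℂ] E) : Prop :=
  ∀ c : ℓ2, HasSum (fun k => c k • f k) (T c)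

namespace IsSynthesisOperator

variable {f : ℕ → E} {T : ℓ2 →L[ℂ] E}

theorem apply_single (hT : IsSynthesisOperator f T) (k : ℕ) : T (lp.single 2 k 1) = f k := by
  refine (hT _).unique ?_
  convert hasSum_ite_eq k (f k) using 2 with j
  by_cases hj : j = k
  · subst hj; simp
  · simp [hj]

theorem range_le_spanClosure (hT : IsSynthesisOperator f T) : T.range ≤ spanClosure f := by
  rintro _ ⟨c, rfl⟩
  refine (Submodule.isClosed_topologicalClosure _).mem_of_tendsto (hT c) ?_
  filter_upwards with s
  refine Submodule.sum_mem _ fun k _ => Submodule.smul_mem _ _ ?_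
  exact Submodule.le_topologicalClosure _ (Submodule.subset_span (Set.mem_range_self k))

variable [CompleteSpace E]

theorem adjoint_apply (hT : IsSynthesisOperator f T) (g : E) (k : ℕ) :
    (T†) g k = inner ℂ (f k) g := by
  rw [← hT.apply_single, ← ContinuousLinearMap.adjoint_inner_right, lp.inner_single_left]
  simp

theorem norm_adjoint_apply_sq (hT : IsSynthesisOperator f T) (g : E) :
    ‖(T†) g‖ ^ 2 = ∑' k, ‖(inner ℂ (f k) g : ℂ)‖ ^ 2 := by
  have h := lp.norm_rpow_eq_tsum (p := 2) (by norm_num) ((T†) g)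
  simp only [ENNReal.toReal_ofNat, Real.rpow_two, hT.adjoint_apply] at h
  exact h

end IsSynthesisOperator

namespace IsFrameSeqWith

variable [CompleteSpace E] {f : ℕ → E} {A B : ℝ} {T : ℓ2 →L[ℂ] E}

theorem mul_norm_sq_le_norm_adjoint_apply_sq (hF : IsFrameSeqWith f A B)
    (hT : IsSynthesisOperator f T) {g : E} (hg : g ∈ spanClosure f) :
    A * ‖g‖ ^ 2 ≤ ‖(T†) g‖ ^ 2 :=
  hT.norm_adjoint_apply_sq g ▸ (hF.2.2 g hg).2.1

theorem norm_adjoint_apply_sq_le (hF : IsFrameSeqWith f A B)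
    (hT : IsSynthesisOperator f T) {g : E} (hg : g ∈ spanClosure f) :
    ‖(T†) g‖ ^ 2 ≤ B * ‖g‖ ^ 2 :=
  hT.norm_adjoint_apply_sq g ▸ (hF.2.2 g hg).2.2

end IsFrameSeqWith

end Frames

/-- for a frame sequence with bounds `A, B`, synthesis operator `T` and the
orthogonal projection `Q` onto `(ker T)ᗮ`: `A‖Qc‖² ≤ ‖Tc‖² ≤ B‖Qc‖²` for all `c ∈ ℓ²`. -/
theorem stmt4 (f : ℕ → H) (A B : ℝ) (hF : IsFrameSeqWith f A B)
    (T : ℓ2 →L[ℂ] H) (hT : ∀ c : ℓ2, HasSum (fun k => c k • f k) (T c))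
    (c : ℓ2) :
    A * ‖projQ T c‖ ^ 2 ≤ ‖T c‖ ^ 2 ∧ ‖T c‖ ^ 2 ≤ B * ‖projQ T c‖ ^ 2 := by
  have hT : IsSynthesisOperator f T := hT
  have hQ : projQ T c ∈ T.kerᗮ := Submodule.coe_mem _
  have hTQ : T (projQ T c) = T c := T.apply_starProjection_orthogonal_ker c
  rw [← hTQ]
  exact ⟨T.mul_norm_sq_le_norm_apply_sq_of_mem_orthogonal_ker hF.1.le hT.range_le_spanClosure
      (fun _ hg => hF.mul_norm_sq_le_norm_adjoint_apply_sq hT hg) hQ,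
    T.norm_apply_sq_le_of_norm_adjoint_apply_sq_le hF.2.1.le
      (hF.norm_adjoint_apply_sq_le hT (hT.range_le_spanClosure ⟨_, rfl⟩))⟩

end
end

section
/- Let (f_k)_{k∈ℕ} be a sequence in H and let T : ℓ²(ℕ) → H be a bounded linear operator with Tc = ∑_k c_k f_k for every c ∈ ℓ²(ℕ), and let Q be the orthogonal projection of ℓ²(ℕ) onto (ker T)ᗮ. If there exist constants A, B > 0 such that A‖Qc‖² ≤ ‖Tc‖² ≤ B‖Qc‖² for every c ∈ ℓ²(ℕ), then (f_k) is a frame sequence; in particular T has closed range. -/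
/- Setting: `H` is a complex Hilbert space, `ℓ2` is the Hilbert space of square-summable
complex sequences with standard orthonormal basis `lp.single 2 k 1`. -/

noncomputable section

variable {H : Type} [NormedAddCommGroup H] [InnerProductSpace ℂ H] [CompleteSpace H]

/-! On `(ker T)ᗮ` the operator `T` is bounded below, so its range is closed and contains the
closed span `V` of the vectors `fₖ = T eₖ` (`eₖ` the unit vectors). The coordinates of `T† g`
are `⟪fₖ, g⟫`, so the frame sum of `g` is `‖T† g‖²`. The upper frame bound is `‖T†‖ = ‖T‖ ≤ √B`.
For the lower one write `g ∈ V` as `g = T c` with `c ⊥ ker T`; then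
`‖g‖² = ⟪c, T† g⟫ ≤ ‖c‖ ‖T† g‖` and `A ‖c‖² ≤ ‖g‖²`. -/

open Submodule ContinuousLinearMap

section Hilbert

variable {𝕜 E F : Type*} [RCLike 𝕜] [NormedAddCommGroup E] [InnerProductSpace 𝕜 E]
  [CompleteSpace E] [NormedAddCommGroup F] [InnerProductSpace 𝕜 F]

lemma ContinuousLinearMap.apply_starProjection_orthogonal_ker_s5 (T : E →L[𝕜] F) (x : E) :
    T ((LinearMap.ker (T : E →ₗ[𝕜] F))ᗮ.starProjection x) = T x := by
  have hx : x - (LinearMap.ker (T : E →ₗ[𝕜] F))ᗮ.starProjection x ∈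
      LinearMap.ker (T : E →ₗ[𝕜] F) := by
    simpa only [orthogonal_orthogonal] using
      sub_starProjection_mem_orthogonal (K := (LinearMap.ker (T : E →ₗ[𝕜] F))ᗮ) x
  rw [LinearMap.mem_ker, coe_coe, map_sub, sub_eq_zero] at hx
  exact hx.symm

lemma ContinuousLinearMap.isClosed_range_of_sq_norm_le {T : E →L[𝕜] F} {A : ℝ} (hA : 0 < A)
    (h : ∀ x ∈ (LinearMap.ker (T : E →ₗ[𝕜] F))ᗮ, A * ‖x‖ ^ 2 ≤ ‖T x‖ ^ 2) :
    IsClosed (Set.range T) := by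
  set S := T ∘L (LinearMap.ker (T : E →ₗ[𝕜] F))ᗮ.subtypeL
  have hS : AntilipschitzWith ⟨(√A)⁻¹, inv_nonneg.mpr (Real.sqrt_nonneg A)⟩ S := by
    refine S.antilipschitz_of_bound fun x => ?_
    have hsq : ‖x‖ ^ 2 ≤ ((√A)⁻¹ * ‖S x‖) ^ 2 := by
      rw [mul_pow, inv_pow, Real.sq_sqrt hA.le, inv_mul_eq_div, le_div_iff₀ hA, mul_comm]
      exact h x x.2
    exact (pow_le_pow_iff_left₀ (norm_nonneg _)
      (mul_nonneg (inv_nonneg.mpr (Real.sqrt_nonneg A)) (norm_nonneg _)) two_ne_zero).mp hsq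
  have hrange : Set.range S = Set.range T := by
    refine Set.Subset.antisymm (Set.range_subset_iff.mpr fun x => Set.mem_range_self (x : E)) ?_
    rintro _ ⟨x, rfl⟩
    exact ⟨⟨_, starProjection_apply_mem _ x⟩, T.apply_starProjection_orthogonal_ker_s5 x⟩
  exact hrange ▸ hS.isClosed_range S.uniformContinuous

lemma ContinuousLinearMap.sq_norm_adjoint_apply_le [CompleteSpace F] {T : E →L[𝕜] F} {B : ℝ}
    (hB : 0 ≤ B) (h : ∀ x, ‖T x‖ ^ 2 ≤ B * ‖x‖ ^ 2) (y : F) : ‖adjoint T y‖ ^ 2 ≤ B * ‖y‖ ^ 2 := by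
  have hT : ‖T‖ ≤ √B := T.opNorm_le_bound (Real.sqrt_nonneg B) fun x =>
    (pow_le_pow_iff_left₀ (norm_nonneg _) (by positivity) two_ne_zero).mp
      (by rw [mul_pow, Real.sq_sqrt hB]; exact h x)
  calc ‖adjoint T y‖ ^ 2 ≤ (‖T‖ * ‖y‖) ^ 2 := by
        gcongr
        simpa only [LinearIsometryEquiv.norm_map] using (adjoint T).le_opNorm y
    _ ≤ (√B * ‖y‖) ^ 2 := by gcongr
    _ = B * ‖y‖ ^ 2 := by rw [mul_pow, Real.sq_sqrt hB]

lemma ContinuousLinearMap.mul_sq_norm_le_sq_norm_adjoint_apply [CompleteSpace F]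
    {T : E →L[𝕜] F} {A : ℝ} {x : E} (hA : 0 ≤ A) (hx : A * ‖x‖ ^ 2 ≤ ‖T x‖ ^ 2) :
    A * ‖T x‖ ^ 2 ≤ ‖adjoint T (T x)‖ ^ 2 := by
  have hcs : ‖T x‖ ^ 2 ≤ ‖x‖ * ‖adjoint T (T x)‖ := by
    calc ‖T x‖ ^ 2 = RCLike.re (inner 𝕜 x (adjoint T (T x))) :=
          T.apply_norm_sq_eq_inner_adjoint_right x
      _ ≤ ‖x‖ * ‖adjoint T (T x)‖ := (RCLike.re_le_norm _).trans (norm_inner_le_norm _ _)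
  rcases (sq_nonneg ‖T x‖).eq_or_lt with h0 | hpos
  · rw [← h0, mul_zero]; positivity
  refine le_of_mul_le_mul_left ?_ hpos
  calc ‖T x‖ ^ 2 * (A * ‖T x‖ ^ 2) = A * (‖T x‖ ^ 2) ^ 2 := by ring
    _ ≤ A * (‖x‖ * ‖adjoint T (T x)‖) ^ 2 := by gcongr
    _ = (A * ‖x‖ ^ 2) * ‖adjoint T (T x)‖ ^ 2 := by ring
    _ ≤ ‖T x‖ ^ 2 * ‖adjoint T (T x)‖ ^ 2 := by gcongr

end Hilbert

lemma lp.hasSum_sq_norm {ι : Type*} {G : ι → Type*} [∀ i, NormedAddCommGroup (G i)]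
    (x : lp G 2) : HasSum (fun i => ‖x i‖ ^ 2) (‖x‖ ^ 2) := by
  simpa using lp.hasSum_norm (p := 2) (by norm_num) x

section SequenceSpace

variable {ι 𝕜 F : Type*} [DecidableEq ι] [RCLike 𝕜] [NormedAddCommGroup F] [InnerProductSpace 𝕜 F]

lemma lp.adjoint_apply_apply [CompleteSpace F] (T : lp (fun _ : ι => 𝕜) 2 →L[𝕜] F) (y : F)
    (i : ι) : adjoint T y i = inner 𝕜 (T (lp.single 2 i 1)) y := by
  rw [← adjoint_inner_right, lp.inner_single_left]
  simp

lemma lp.apply_single_eq_of_hasSum {T : lp (fun _ : ι => 𝕜) 2 →L[𝕜] F} {f : ι → F}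
    (hT : ∀ c, HasSum (fun i => c i • f i) (T c)) (i : ι) : T (lp.single 2 i 1) = f i := by
  refine (hT _).unique ?_
  convert hasSum_ite_eq i (f i) using 2 with j
  by_cases hj : j = i <;> simp [hj]

end SequenceSpace

omit [CompleteSpace H] in
lemma spanClosure_le_range {E : Type*} [NormedAddCommGroup E] [NormedSpace ℂ E] {f : ℕ → H}
    {T : E →L[ℂ] H} (hf : ∀ k, f k ∈ Set.range T) (hT : IsClosed (Set.range T)) :
    spanClosure f ≤ LinearMap.range (T : E →ₗ[ℂ] H) :=
  topologicalClosure_minimal _ (span_le.mpr (Set.range_subset_iff.mpr hf)) hT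

lemma isFrameSeqWith_of_adjoint_bounds {f : ℕ → H} {T : ℓ2 →L[ℂ] H}
    (hTf : ∀ k, T (lp.single 2 k 1) = f k) {A B : ℝ} (hA : 0 < A) (hB : 0 < B)
    (h : ∀ g ∈ spanClosure f, A * ‖g‖ ^ 2 ≤ ‖adjoint T g‖ ^ 2 ∧ ‖adjoint T g‖ ^ 2 ≤ B * ‖g‖ ^ 2) :
    IsFrameSeqWith f A B := by
  refine ⟨hA, hB, fun g hg => ?_⟩
  have hsum : HasSum (fun k => ‖(inner ℂ (f k) g : ℂ)‖ ^ 2) (‖adjoint T g‖ ^ 2) := by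
    simpa only [lp.adjoint_apply_apply, hTf] using lp.hasSum_sq_norm (adjoint T g)
  rw [hsum.tsum_eq]
  exact ⟨hsum.summable, h g hg⟩

/-- if the synthesis operator `T` of the sequence `(fₖ)` is bounded, defined on
all of `ℓ²`, and satisfies `A‖Qc‖² ≤ ‖Tc‖² ≤ B‖Qc‖²` for some `A, B > 0` and all `c`, then
`(fₖ)` is a frame sequence; in particular `T` has closed range. -/
theorem stmt5 (f : ℕ → H) (T : ℓ2 →L[ℂ] H)
    (hT : ∀ c : ℓ2, HasSum (fun k => c k • f k) (T c))
    (A B : ℝ) (hA : 0 < A) (hB : 0 < B)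
    (hin : ∀ c : ℓ2, A * ‖projQ T c‖ ^ 2 ≤ ‖T c‖ ^ 2 ∧ ‖T c‖ ^ 2 ≤ B * ‖projQ T c‖ ^ 2) :
    (∃ A' B' : ℝ, IsFrameSeqWith f A' B') ∧ IsClosed (Set.range T) := by
  have hTf : ∀ k, T (lp.single 2 k 1) = f k := lp.apply_single_eq_of_hasSum hT
  have hlower : ∀ c ∈ (LinearMap.ker (T : ℓ2 →ₗ[ℂ] H))ᗮ, A * ‖c‖ ^ 2 ≤ ‖T c‖ ^ 2 := fun c hc => by
    simpa only [projQ, ← starProjection.eq_def, starProjection_eq_self_iff.mpr hc] using (hin c).1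
  have hupper : ∀ c, ‖T c‖ ^ 2 ≤ B * ‖c‖ ^ 2 := fun c =>
    (hin c).2.trans (by gcongr; exact norm_starProjection_apply_le _ c)
  have hclosed : IsClosed (Set.range T) := T.isClosed_range_of_sq_norm_le hA hlower
  refine ⟨⟨A, B, isFrameSeqWith_of_adjoint_bounds hTf hA hB fun g hg =>
    ⟨?_, T.sq_norm_adjoint_apply_le hB.le hupper g⟩⟩, hclosed⟩
  obtain ⟨c, rfl⟩ : g ∈ Set.range T := spanClosure_le_range (fun k => ⟨_, hTf k⟩) hclosed hg
  rw [← T.apply_starProjection_orthogonal_ker_s5 c]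
  exact T.mul_sq_norm_le_sq_norm_adjoint_apply hA.le (hlower _ (starProjection_apply_mem _ c))

end
end
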